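/- arXiv:0911.0879 — 3 statements merged into one kernel-verified Lean document; each statement's English description precedes it below -/
import Mathlib

section
/- Let d₁ = d₂d₃ − 1 and let φ = Σᵢ |i⟩⊗φᵢ and ψ = Σᵢ |i⟩⊗ψᵢ in ℂ^{d₁}⊗(ℂ^{d₂}⊗ℂ^{d₃}) with the families (φᵢ) and (ψᵢ) each linearly independent (i = 0,…,d₁−1). Let φ′ and ψ′ be nonzero vectors spanning the one-dimensional orthogonal complements of span{φᵢ} and span{ψᵢ} in ℂ^{d₂}⊗ℂ^{d₃}. Then there exist invertible L₁, L₂, L₃ with φ = (L₁⊗L₂⊗L₃)ψ if and only if φ′ and ψ′ have the same bipartite (matrix) rank as elements of ℂ^{d₂}⊗ℂ^{d₃}. -/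
/-!
The φᵢ span the hyperplane orthogonal to φ′ (they are d₂d₃ − 1 independent vectors orthogonal
to it), and likewise for ψ. Since L₁ only changes the basis of such a hyperplane, the SLOCC
relation says exactly that T = L₂ ⊗ L₃ maps ψ′^⊥ onto φ′^⊥, i.e. that the adjoint T* sends φ′ to
a nonzero multiple of ψ′. On matrices T* is A ↦ L₂ᴴ A (L₃ᵀ)ᴴ, which preserves rank; conversely,
two matrices of equal rank are related by invertible P, Q as ψ′ = P φ′ Q, and that yields T.
-/

open Module Submodule
open scoped Matrix

namespace Submodule

variable {K V : Type*} [Field K] [AddCommGroup V] [Module K V] [FiniteDimensional K V]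

theorem exists_linearEquiv_extend {S T : Submodule K V} (β : S ≃ₗ[K] T) :
    ∃ e : V ≃ₗ[K] V, ∀ x : S, e x = β x := by
  obtain ⟨S', hS⟩ := S.exists_isCompl
  obtain ⟨T', hT⟩ := T.exists_isCompl
  have hdim : finrank K S' = finrank K T' := by
    have := finrank_add_eq_of_isCompl hS
    have := finrank_add_eq_of_isCompl hT
    have := β.finrank_eq
    omega
  let γ : S' ≃ₗ[K] T' := LinearEquiv.ofFinrankEq _ _ hdim
  refine ⟨(prodEquivOfIsCompl S S' hS).symm ≪≫ₗ β.prodCongr γ ≪≫ₗ prodEquivOfIsCompl T T' hT,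
    fun x => ?_⟩
  simp

theorem exists_linearEquiv_map_eq {S T : Submodule K V} (h : finrank K S = finrank K T) :
    ∃ e : V ≃ₗ[K] V, S.map (e : V →ₗ[K] V) = T := by
  let β := LinearEquiv.ofFinrankEq S T h
  obtain ⟨e, he⟩ := exists_linearEquiv_extend β
  refine ⟨e, le_antisymm ?_ fun y hy => ⟨β.symm ⟨y, hy⟩, (β.symm ⟨y, hy⟩).2, by simp [he]⟩⟩
  rintro _ ⟨x, hx, rfl⟩
  simp [he ⟨x, hx⟩]

end Submodule

namespace LinearMap

variable {K V W : Type*} [Field K] [AddCommGroup V] [Module K V] [AddCommGroup W] [Module K W]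

theorem exists_linearEquiv_comp_eq_of_ker_eq [FiniteDimensional K W] {f g : V →ₗ[K] W}
    (h : ker g = ker f) : ∃ e : W ≃ₗ[K] W, ∀ v, e (g v) = f v := by
  let β := g.quotKerEquivRange.symm ≪≫ₗ quotEquivOfEq _ _ h ≪≫ₗ f.quotKerEquivRange
  obtain ⟨e, he⟩ := Submodule.exists_linearEquiv_extend β
  refine ⟨e, fun v => ?_⟩
  rw [he ⟨g v, mem_range_self g v⟩]
  simp [β, quotKerEquivRange_symm_apply_image]

theorem exists_linearEquiv_eq_comp_comp_of_finrank_range_eq [FiniteDimensional K V]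
    [FiniteDimensional K W] {f g : V →ₗ[K] W}
    (h : finrank K (range f) = finrank K (range g)) :
    ∃ (e : V ≃ₗ[K] V) (e' : W ≃ₗ[K] W), ∀ v, f v = e' (g (e v)) := by
  obtain ⟨e, he⟩ : ∃ e : V ≃ₗ[K] V, (ker f).map (e : V →ₗ[K] V) = ker g := by
    apply Submodule.exists_linearEquiv_map_eq
    have := f.finrank_range_add_finrank_ker
    have := g.finrank_range_add_finrank_ker
    omega
  have hker : ker (g ∘ₗ e.toLinearMap) = ker f := by
    rw [ker_comp, ← he, Submodule.comap_map_eq_of_injective e.injective]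
  obtain ⟨e', he'⟩ := exists_linearEquiv_comp_eq_of_ker_eq hker
  exact ⟨e, e', fun v => (he' v).symm⟩

end LinearMap

theorem Matrix.exists_isUnit_eq_mul_mul_of_rank_eq {K m n : Type*} [Field K] [Fintype m]
    [Fintype n] [DecidableEq m] [DecidableEq n] {A B : Matrix m n K} (h : A.rank = B.rank) :
    ∃ (P : Matrix m m K) (Q : Matrix n n K), IsUnit P ∧ IsUnit Q ∧ A = P * B * Q := by
  obtain ⟨e, e', he⟩ := LinearMap.exists_linearEquiv_eq_comp_comp_of_finrank_range_eq h
  refine ⟨LinearMap.toMatrix' e', LinearMap.toMatrix' e,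
    LinearMap.isUnit_toMatrix'_iff.mpr ((Module.End.isUnit_iff _).mpr e'.bijective),
    LinearMap.isUnit_toMatrix'_iff.mpr ((Module.End.isUnit_iff _).mpr e.bijective), ?_⟩
  refine Matrix.toLin'.injective (LinearMap.ext fun v => ?_)
  simpa [Matrix.toLin'_mul] using he v

namespace Module.Dual

variable {K V : Type*} [Field K] [AddCommGroup V] [Module K V]

theorem exists_eq_smul_of_ker_le {f g : Module.Dual K V} (h : LinearMap.ker f ≤ LinearMap.ker g) :
    ∃ c : K, g = c • f := by
  have hg := mem_span_of_iInf_ker_le_ker (L := fun _ : Unit => f) (K := g) (by simpa using h)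
  rw [Set.range_const, mem_span_singleton] at hg
  obtain ⟨c, hc⟩ := hg
  exact ⟨c, hc.symm⟩

theorem span_range_eq_ker {ι : Type*} [Fintype ι] [FiniteDimensional K V] {f : Module.Dual K V}
    (hf : f ≠ 0) {v : ι → V} (hv : LinearIndependent K v)
    (hcard : Fintype.card ι + 1 = finrank K V) (hvf : ∀ i, f (v i) = 0) :
    span K (Set.range v) = LinearMap.ker f := by
  refine eq_of_le_of_finrank_eq (span_le.mpr (Set.range_subset_iff.mpr hvf)) ?_
  have := f.finrank_ker_add_one_of_ne_zero hf
  rw [finrank_span_eq_card hv]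
  omega

end Module.Dual

theorem exists_isUnit_eq_sum_smul_iff_span_le {ι K V : Type*} [Fintype ι] [DecidableEq ι]
    [Field K] [AddCommGroup V] [Module K V] {u w : ι → V} (hu : LinearIndependent K u)
    (hw : LinearIndependent K w) :
    (∃ L : Matrix ι ι K, IsUnit L ∧ ∀ i, u i = ∑ j, L i j • w j) ↔
      span K (Set.range w) ≤ span K (Set.range u) := by
  have := FiniteDimensional.span_of_finite K (Set.finite_range u)
  have := FiniteDimensional.span_of_finite K (Set.finite_range w)
  have hdim : finrank K (span K (Set.range w)) = finrank K (span K (Set.range u)) := by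
    rw [finrank_span_eq_card hu, finrank_span_eq_card hw]
  constructor
  · rintro ⟨L, -, hL⟩
    refine (eq_of_le_of_finrank_eq (span_le.mpr (Set.range_subset_iff.mpr fun i => ?_))
      hdim.symm).ge
    rw [hL i]
    exact sum_mem fun j _ => smul_mem _ _ (subset_span (Set.mem_range_self j))
  · intro hle
    have heq := eq_of_le_of_finrank_eq hle hdim
    let bw := Basis.span hw
    let bu := (Basis.span hu).map (LinearEquiv.ofEq _ _ heq.symm)
    let := bw.invertibleToMatrix bu
    refine ⟨(bw.toMatrix bu)ᵀ, (Matrix.isUnit_transpose _).mpr (isUnit_of_invertible _),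
      fun i => ?_⟩
    have := congrArg Subtype.val (bw.sum_toMatrix_smul_self bu i)
    simpa [bw, bu, Basis.span_apply] using this.symm

namespace Matrix

variable {K m n : Type*} [Fintype m] [Fintype n]

section CommRing

variable [CommRing K] [StarRing K]

def frobeniusInner : Matrix m n K →ₗ⋆[K] Matrix m n K →ₗ[K] K :=
  LinearMap.mk₂'ₛₗ (starRingEnd K) (RingHom.id K)
    (fun X A => ∑ a, ∑ b, starRingEnd K (X a b) * A a b)
    (fun X Y A => by simp [add_mul, Finset.sum_add_distrib])
    (fun c X A => by simp [Finset.mul_sum, mul_assoc])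
    (fun X A B => by simp [mul_add, Finset.sum_add_distrib])
    (fun c X A => by simp [Finset.mul_sum, mul_left_comm])

theorem frobeniusInner_apply (X A : Matrix m n K) :
    frobeniusInner X A = ∑ a, ∑ b, starRingEnd K (X a b) * A a b := rfl

theorem frobeniusInner_eq_trace (X A : Matrix m n K) : frobeniusInner X A = trace (Xᴴ * A) := by
  simp only [frobeniusInner_apply, trace, diag_apply, mul_apply, conjTranspose_apply]
  rw [Finset.sum_comm]
  rfl

theorem frobeniusInner_mul_mul {m' n' : Type*} [Fintype m'] [Fintype n'] (X : Matrix m' n' K)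
    (P : Matrix m' m K) (A : Matrix m n K) (Q : Matrix n n' K) :
    frobeniusInner X (P * A * Q) = frobeniusInner (Pᴴ * X * Qᴴ) A := by
  rw [frobeniusInner_eq_trace, frobeniusInner_eq_trace, ← Matrix.mul_assoc, trace_mul_comm]
  simp [Matrix.mul_assoc]

variable [DecidableEq m] [DecidableEq n]

theorem frobeniusInner_single_one (X : Matrix m n K) (a : m) (b : n) :
    frobeniusInner X (single a b 1) = starRingEnd K (X a b) := by
  simp [frobeniusInner_apply, single_apply, ite_and]

theorem frobeniusInner_injective : Function.Injective (frobeniusInner : Matrix m n K → _) := by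
  intro X Y h
  ext a b
  simpa [frobeniusInner_single_one, starRingEnd_apply] using congr($h (single a b 1))

end CommRing

variable [Field K] [StarRing K] [DecidableEq m] [DecidableEq n]

theorem ker_frobeniusInner_le_iff {X Y : Matrix m n K} :
    LinearMap.ker (frobeniusInner Y) ≤ LinearMap.ker (frobeniusInner X) ↔ ∃ c : K, X = c • Y := by
  constructor
  · intro h
    obtain ⟨c, hc⟩ := Module.Dual.exists_eq_smul_of_ker_le h
    refine ⟨starRingEnd K c, frobeniusInner_injective ?_⟩
    rw [hc, LinearMap.map_smulₛₗ, starRingEnd_self_apply]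
  · rintro ⟨c, rfl⟩ A hA
    simp_all

theorem span_range_eq_ker_frobeniusInner {ι : Type*} [Fintype ι] {u : ι → Matrix m n K}
    (hu : LinearIndependent K u) {X : Matrix m n K} (hX : X ≠ 0)
    (hcard : Fintype.card ι + 1 = Fintype.card m * Fintype.card n)
    (huX : ∀ i, frobeniusInner X (u i) = 0) :
    span K (Set.range u) = LinearMap.ker (frobeniusInner X) :=
  Module.Dual.span_range_eq_ker (frobeniusInner_injective.ne hX |>.trans_eq (map_zero _)) hu
    (by simp [hcard, finrank_matrix]) huX

theorem mul_mul_injective {R : Type*} [CommRing R] {P : Matrix m m R} {Q : Matrix n n R}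
    (hP : IsUnit P) (hQ : IsUnit Q) : Function.Injective fun A : Matrix m n R => P * A * Q := by
  let := hP.invertible
  let := hQ.invertible
  exact (mul_left_injective_of_invertible Q).comp (mul_right_injective_of_invertible P)

theorem rank_mul_mul_of_isUnit {R : Type*} [CommRing R] {P : Matrix m m R} {Q : Matrix n n R}
    (hP : IsUnit P) (hQ : IsUnit Q) (A : Matrix m n R) : (P * A * Q).rank = A.rank := by
  rw [rank_mul_eq_left_of_isUnit_det _ _ ((isUnit_iff_isUnit_det Q).mp hQ),
    rank_mul_eq_right_of_isUnit_det _ _ ((isUnit_iff_isUnit_det P).mp hP)]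

theorem exists_isUnit_eq_sum_smul_mul_mul_iff {ι : Type*} [Fintype ι] [DecidableEq ι]
    {u w : ι → Matrix m n K} (hu : LinearIndependent K u) (hw : LinearIndependent K w)
    {X Y : Matrix m n K} (hX : span K (Set.range u) = LinearMap.ker (frobeniusInner X))
    (hY : span K (Set.range w) = LinearMap.ker (frobeniusInner Y))
    {P : Matrix m m K} {Q : Matrix n n K} (hP : IsUnit P) (hQ : IsUnit Q) :
    (∃ L : Matrix ι ι K, IsUnit L ∧ ∀ i, u i = ∑ j, L i j • (P * w j * Q)) ↔
      ∃ c : K, Pᴴ * X * Qᴴ = c • Y := by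
  let T : Matrix m n K →ₗ[K] Matrix m n K := mulRightLinearMap m K Q ∘ₗ mulLeftLinearMap n K P
  have hTw : LinearIndependent K fun j => P * w j * Q :=
    hw.map' T (LinearMap.ker_eq_bot.mpr (mul_mul_injective hP hQ))
  have hrange : Set.range (fun j => P * w j * Q) = T '' Set.range w := Set.range_comp T w
  have hadj : frobeniusInner X ∘ₗ T = frobeniusInner (Pᴴ * X * Qᴴ) :=
    LinearMap.ext fun A => frobeniusInner_mul_mul X P A Q
  rw [exists_isUnit_eq_sum_smul_iff_span_le hu hTw, ← ker_frobeniusInner_le_iff, hrange,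
    ← map_span, hX, hY, map_le_iff_le_comap, ← LinearMap.ker_comp, hadj]

end Matrix

open Matrix in
theorem slocc_equiv_iff_complement_rank_eq
    (d₁ d₂ d₃ : ℕ) (hd : d₁ + 1 = d₂ * d₃)
    (φ ψ : Fin d₁ → Matrix (Fin d₂) (Fin d₃) ℂ)
    (hφ : LinearIndependent ℂ φ) (hψ : LinearIndependent ℂ ψ)
    (φ' ψ' : Matrix (Fin d₂) (Fin d₃) ℂ) (hφ' : φ' ≠ 0) (hψ' : ψ' ≠ 0)
    (hoφ : ∀ i, ∑ a, ∑ b, (starRingEnd ℂ) (φ' a b) * φ i a b = 0)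
    (hoψ : ∀ i, ∑ a, ∑ b, (starRingEnd ℂ) (ψ' a b) * ψ i a b = 0) :
    (∃ (L₁ : Matrix (Fin d₁) (Fin d₁) ℂ) (L₂ : Matrix (Fin d₂) (Fin d₂) ℂ)
        (L₃ : Matrix (Fin d₃) (Fin d₃) ℂ),
        IsUnit L₁ ∧ IsUnit L₂ ∧ IsUnit L₃ ∧
        ∀ i, φ i = ∑ j, L₁ i j • (L₂ * ψ j * L₃ᵀ)) ↔
      φ'.rank = ψ'.rank := by
  have hφspan := span_range_eq_ker_frobeniusInner hφ hφ' (by simp [hd]) hoφ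
  have hψspan := span_range_eq_ker_frobeniusInner hψ hψ' (by simp [hd]) hoψ
  constructor
  · rintro ⟨L₁, L₂, L₃, hL₁, hL₂, hL₃, hφψ⟩
    have hL₃t := (isUnit_transpose L₃).mpr hL₃
    obtain ⟨c, hc⟩ := (exists_isUnit_eq_sum_smul_mul_mul_iff hφ hψ hφspan hψspan hL₂ hL₃t).mp
      ⟨L₁, hL₁, hφψ⟩
    have hL₂h := (isUnit_conjTranspose L₂).mpr hL₂
    have hL₃th := (isUnit_conjTranspose L₃ᵀ).mpr hL₃t
    have hc0 : c ≠ 0 := by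
      rintro rfl
      refine hφ' (mul_mul_injective hL₂h hL₃th ?_)
      simpa using hc
    rw [← rank_mul_mul_of_isUnit hL₂h hL₃th φ', hc,
      rank_smul_of_mem_nonZeroDivisors _ (mem_nonZeroDivisors_of_ne_zero hc0)]
  · intro hrank
    obtain ⟨P, Q, hP, hQ, hψφ⟩ := exists_isUnit_eq_mul_mul_of_rank_eq hrank.symm
    have hPh := (isUnit_conjTranspose P).mpr hP
    have hQh := (isUnit_conjTranspose Q).mpr hQ
    obtain ⟨L₁, hL₁, hφψ⟩ := (exists_isUnit_eq_sum_smul_mul_mul_iff hφ hψ hφspan hψspan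
      hPh hQh).mpr ⟨1, by simpa using hψφ.symm⟩
    exact ⟨L₁, Pᴴ, Qᴴᵀ, hL₁, hPh, (isUnit_transpose _).mpr hQh, by simpa using hφψ⟩
end

section
/- In ℂ³⊗ℂ²⊗ℂ², the states Φ₁ = |0⟩|00⟩ + |1⟩|01⟩ + |2⟩|11⟩ and Φ₂ = |0⟩|00⟩ + |1⟩(|01⟩+|10⟩) + |2⟩|11⟩ are not SLOCC-equivalent: there do not exist invertible linear maps L₁ on ℂ³ and L₂, L₃ on ℂ² with (L₁⊗L₂⊗L₃)Φ₁ = Φ₂. -/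
/-!
STATEMENT 15: In ℂ³⊗ℂ²⊗ℂ², the states
Φ₁ = |0⟩|00⟩ + |1⟩|01⟩ + |2⟩|11⟩ and
Φ₂ = |0⟩|00⟩ + |1⟩(|01⟩+|10⟩) + |2⟩|11⟩
are not SLOCC-equivalent: there are no invertible L₁ on ℂ³ and L₂, L₃ on ℂ²
with (L₁⊗L₂⊗L₃)Φ₁ = Φ₂.  Tensors are modeled as coefficient functions
Fin 3 → Fin 2 → Fin 2 → ℂ, local operators as matrices.
-/

open scoped BigOperators

noncomputable def Phi1 : Fin 3 → Fin 2 → Fin 2 → ℂ := fun i a b =>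
  if (i = 0 ∧ a = 0 ∧ b = 0) ∨ (i = 1 ∧ a = 0 ∧ b = 1) ∨ (i = 2 ∧ a = 1 ∧ b = 1)
  then 1 else 0

noncomputable def Phi2 : Fin 3 → Fin 2 → Fin 2 → ℂ := fun i a b =>
  if (i = 0 ∧ a = 0 ∧ b = 0) ∨ (i = 1 ∧ a = 0 ∧ b = 1) ∨ (i = 1 ∧ a = 1 ∧ b = 0)
      ∨ (i = 2 ∧ a = 1 ∧ b = 1)
  then 1 else 0

theorem Phi1_Phi2_not_slocc_equivalent :
    ¬ ∃ (L₁ : Matrix (Fin 3) (Fin 3) ℂ) (L₂ L₃ : Matrix (Fin 2) (Fin 2) ℂ),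
        IsUnit L₁ ∧ IsUnit L₂ ∧ IsUnit L₃ ∧
        ∀ i a b,
          (∑ i', ∑ a', ∑ b', L₁ i i' * L₂ a a' * L₃ b b' * Phi1 i' a' b')
            = Phi2 i a b := by
  rintro ⟨K, M, N, hK, hM, hN, h⟩
  have hMd : IsUnit M.det := (Matrix.isUnit_iff_isUnit_det M).mp hM
  have hNd : IsUnit N.det := (Matrix.isUnit_iff_isUnit_det N).mp hN
  have hMinv : M⁻¹ * M = 1 := Matrix.nonsing_inv_mul M hMd
  have hNinv : N⁻¹ * N = 1 := Matrix.nonsing_inv_mul N hNd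
  set u0 := M⁻¹ 1 0 with hu0
  set u1 := M⁻¹ 1 1 with hu1
  set v0 := N⁻¹ 0 0 with hv0
  set v1 := N⁻¹ 0 1 with hv1
  have hM0 : u0 * M 0 0 + u1 * M 1 0 = 0 := by
    have := congrFun (congrFun hMinv 1) 0
    simpa [Matrix.mul_apply, Fin.sum_univ_two, Matrix.one_apply] using this
  have hM1 : u0 * M 0 1 + u1 * M 1 1 = 1 := by
    have := congrFun (congrFun hMinv 1) 1
    simpa [Matrix.mul_apply, Fin.sum_univ_two, Matrix.one_apply] using this
  have hN0 : v0 * N 0 0 + v1 * N 1 0 = 1 := by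
    have := congrFun (congrFun hNinv 0) 0
    simpa [Matrix.mul_apply, Fin.sum_univ_two, Matrix.one_apply] using this
  have hN1 : v0 * N 0 1 + v1 * N 1 1 = 0 := by
    have := congrFun (congrFun hNinv 0) 1
    simpa [Matrix.mul_apply, Fin.sum_univ_two, Matrix.one_apply] using this
  have key : ∀ i : Fin 3,
      u0 * v0 * Phi2 i 0 0 + u0 * v1 * Phi2 i 0 1
        + u1 * v0 * Phi2 i 1 0 + u1 * v1 * Phi2 i 1 1 = 0 := by
    intro i
    rw [← h i 0 0, ← h i 0 1, ← h i 1 0, ← h i 1 1]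
    simp (config := { decide := true }) only [Phi1, Fin.sum_univ_three, Fin.sum_univ_two,
      if_true, if_false, mul_one, mul_zero, add_zero, zero_add]
    linear_combination
      (K i 0 * (v0 * N 0 0 + v1 * N 1 0) + K i 1 * (v0 * N 0 1 + v1 * N 1 1)) * hM0
        + (K i 2 * (v0 * N 0 1 + v1 * N 1 1)) * hM1 + K i 2 * hN1
  have k0 := key 0
  have k1 := key 1
  have k2 := key 2
  simp (config := { decide := true }) only [Phi2, if_true, if_false, mul_one, mul_zero,
    add_zero, zero_add] at k0 k1 k2
  -- k0 : u0 * v0 = 0, k1 : u0*v1 + u1*v0 = 0, k2 : u1*v1 = 0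
  have hune : ¬ (u0 = 0 ∧ u1 = 0) := by
    rintro ⟨h0, h1⟩
    rw [h0, h1] at hM1; norm_num at hM1
  have hvne : ¬ (v0 = 0 ∧ v1 = 0) := by
    rintro ⟨h0, h1⟩
    rw [h0, h1] at hN0; norm_num at hN0
  rcases mul_eq_zero.mp k0 with h0 | h0
  · have hu1ne : u1 ≠ 0 := fun h1 => hune ⟨h0, h1⟩
    have hw0 : v0 = 0 := by
      rw [h0] at k1
      have : u1 * v0 = 0 := by linear_combination k1
      exact (mul_eq_zero.mp this).resolve_left hu1ne
    have hw1 : v1 = 0 := (mul_eq_zero.mp k2).resolve_left hu1ne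
    exact hvne ⟨hw0, hw1⟩
  · have hv1ne : v1 ≠ 0 := fun h1 => hvne ⟨h0, h1⟩
    have hw0 : u0 = 0 := by
      rw [h0] at k1
      have : u0 * v1 = 0 := by linear_combination k1
      exact (mul_eq_zero.mp this).resolve_right hv1ne
    have hw1 : u1 = 0 := (mul_eq_zero.mp k2).resolve_right hv1ne
    exact hune ⟨hw0, hw1⟩
end

section
/- If φ = Σ_{i=1}^{d₁} |i⟩⊗φᵢ and ψ = Σ_{i=1}^{d₁} |i⟩⊗ψᵢ are tensors in ℂ^{d₁}⊗(V₂⊗V₃) with (φᵢ) and (ψᵢ) linearly independent families in V₂⊗V₃, then there exist invertible L₁, L₂, L₃ with φ = (L₁⊗L₂⊗L₃)ψ if and only if there exist invertible L₂, L₃ with span{φᵢ : 1≤i≤d₁} = (L₂⊗L₃)(span{ψᵢ : 1≤i≤d₁}). -/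
/-!
For fixed `L₂, L₃`, the automorphism `L₂ ⊗ L₃` carries `ψ` to a linearly independent family
`ψ'` with span `(L₂ ⊗ L₃)(span ψ)`, so the claim reduces to: two linearly independent families
`φ, ψ'` indexed by the same finite type span the same subspace iff `φ = L₁ ψ'` for an invertible
matrix `L₁`. One direction holds because an invertible matrix and its inverse each map a family
into the span of the other; for the other, take `L₁` to be the change-of-basis matrix between the
bases `φ` and `ψ'` of the common span.
-/

open scoped TensorProduct Matrix
open Submodule Set Module

section
variable {R M ι : Type*} [CommRing R] [AddCommGroup M] [Module R M] [Fintype ι]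

theorem span_range_sum_smul_le (A : Matrix ι ι R) (w : ι → M) :
    span R (range fun i ↦ ∑ j, A i j • w j) ≤ span R (range w) :=
  span_le.2 <| range_subset_iff.2 fun _ ↦
    sum_mem fun j _ ↦ smul_mem _ _ (subset_span (mem_range_self j))

theorem sum_smul_sum_smul_eq_mul (A B : Matrix ι ι R) (w : ι → M) (i : ι) :
    ∑ j, A i j • ∑ k, B j k • w k = ∑ k, (A * B) i k • w k := by
  simp only [Finset.smul_sum, smul_smul, Matrix.mul_apply, Finset.sum_smul]
  exact Finset.sum_comm

theorem span_range_sum_smul_of_isUnit [DecidableEq ι] {A : Matrix ι ι R} (hA : IsUnit A)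
    (w : ι → M) :
    span R (range fun i ↦ ∑ j, A i j • w j) = span R (range w) := by
  refine le_antisymm (span_range_sum_smul_le A w) ?_
  have hw : w = fun i ↦ ∑ j, A⁻¹ i j • ∑ k, A j k • w k := by
    funext i
    rw [sum_smul_sum_smul_eq_mul, Matrix.nonsing_inv_mul _ ((Matrix.isUnit_iff_isUnit_det A).1 hA)]
    simp [Matrix.one_apply]
  calc span R (range w) = span R (range fun i ↦ ∑ j, A⁻¹ i j • ∑ k, A j k • w k) := by
        rw [← hw]
    _ ≤ _ := span_range_sum_smul_le _ _

theorem exists_isUnit_matrix_of_span_range_eq [DecidableEq ι] {v w : ι → M}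
    (hv : LinearIndependent R v) (hw : LinearIndependent R w)
    (h : span R (range v) = span R (range w)) :
    ∃ A : Matrix ι ι R, IsUnit A ∧ ∀ i, v i = ∑ j, A i j • w j := by
  let bv := Basis.span hv
  let bw := (Basis.span hw).map (LinearEquiv.ofEq _ _ h.symm)
  have := bw.invertibleToMatrix bv
  refine ⟨(bw.toMatrix bv)ᵀ, isUnit_of_invertible _, fun i ↦ ?_⟩
  have hbv := congrArg Subtype.val (bw.sum_toMatrix_smul_self bv i)
  simpa [bv, bw, Basis.span_apply] using hbv.symm

theorem exists_isUnit_matrix_iff_span_range_eq [DecidableEq ι] {v w : ι → M}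
    (hv : LinearIndependent R v) (hw : LinearIndependent R w) :
    (∃ A : Matrix ι ι R, IsUnit A ∧ ∀ i, v i = ∑ j, A i j • w j) ↔
      span R (range v) = span R (range w) := by
  refine ⟨fun ⟨A, hA, hvw⟩ ↦ ?_, exists_isUnit_matrix_of_span_range_eq hv hw⟩
  rw [funext hvw]
  exact span_range_sum_smul_of_isUnit hA w

end

theorem slocc_equiv_iff_span_equiv_general
    {V₂ V₃ : Type*}
    [AddCommGroup V₂] [Module ℂ V₂]
    [AddCommGroup V₃] [Module ℂ V₃]
    (d₁ : ℕ) (φ ψ : Fin d₁ → V₂ ⊗[ℂ] V₃)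
    (hφ : LinearIndependent ℂ φ) (hψ : LinearIndependent ℂ ψ) :
    (∃ (L₁ : Matrix (Fin d₁) (Fin d₁) ℂ) (L₂ : V₂ ≃ₗ[ℂ] V₂) (L₃ : V₃ ≃ₗ[ℂ] V₃),
        IsUnit L₁ ∧
        ∀ i, φ i = ∑ j, L₁ i j •
          TensorProduct.map L₂.toLinearMap L₃.toLinearMap (ψ j)) ↔
      (∃ (L₂ : V₂ ≃ₗ[ℂ] V₂) (L₃ : V₃ ≃ₗ[ℂ] V₃),
        Submodule.span ℂ (Set.range φ) =
          Submodule.map (TensorProduct.map L₂.toLinearMap L₃.toLinearMap)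
            (Submodule.span ℂ (Set.range ψ))) := by
  have for_fixed (L₂ : V₂ ≃ₗ[ℂ] V₂) (L₃ : V₃ ≃ₗ[ℂ] V₃) :
      (∃ L₁ : Matrix (Fin d₁) (Fin d₁) ℂ, IsUnit L₁ ∧
        ∀ i, φ i = ∑ j, L₁ i j •
          TensorProduct.map L₂.toLinearMap L₃.toLinearMap (ψ j)) ↔
      span ℂ (range φ) = map (TensorProduct.map L₂.toLinearMap L₃.toLinearMap)
        (span ℂ (range ψ)) := by
    rw [map_span, ← range_comp]
    exact exists_isUnit_matrix_iff_span_range_eq hφ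
      (hψ.map' _ (TensorProduct.congr L₂ L₃).ker)
  simp only [exists_comm (α := Matrix _ _ _), for_fixed]

theorem slocc_equiv_iff_span_equiv
    {V₂ V₃ : Type*}
    [AddCommGroup V₂] [Module ℂ V₂] [FiniteDimensional ℂ V₂]
    [AddCommGroup V₃] [Module ℂ V₃] [FiniteDimensional ℂ V₃]
    (d₁ : ℕ) (φ ψ : Fin d₁ → V₂ ⊗[ℂ] V₃)
    (hφ : LinearIndependent ℂ φ) (hψ : LinearIndependent ℂ ψ) :
    (∃ (L₁ : Matrix (Fin d₁) (Fin d₁) ℂ) (L₂ : V₂ ≃ₗ[ℂ] V₂) (L₃ : V₃ ≃ₗ[ℂ] V₃),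
        IsUnit L₁ ∧
        ∀ i, φ i = ∑ j, L₁ i j •
          TensorProduct.map L₂.toLinearMap L₃.toLinearMap (ψ j)) ↔
      (∃ (L₂ : V₂ ≃ₗ[ℂ] V₂) (L₃ : V₃ ≃ₗ[ℂ] V₃),
        Submodule.span ℂ (Set.range φ) =
          Submodule.map (TensorProduct.map L₂.toLinearMap L₃.toLinearMap)
            (Submodule.span ℂ (Set.range ψ))) :=
  slocc_equiv_iff_span_equiv_general d₁ φ ψ hφ hψ
end
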